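/- arXiv:1205.0357 — 3 statements merged into one kernel-verified Lean document; each statement's English description precedes it below -/
import Mathlib

section
/- The set of canonical partial term graphs over a signature Σ ordered by ≤⊥r is a cpo: it has least element ⊥, and every directed set G has a least upper bound, which is the canonical term graph determined by the labelled quotient tree (P, l, ∼) with P = ⋃_{g∈G} P(g), ∼ = ⋃_{g∈G} ∼_g, and l(π) = f if f ∈ Σ and g(π) = f for some g ∈ G, and l(π) = ⊥ otherwise. -/
set_option autoImplicit false

namespace TGR

/-- A signature: a type of symbols, each with a finite arity. -/
structure Signature where
  Sym : Type
  ar : Sym → ℕ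

/-- The signature `Σ_⊥`: `Σ` extended by a fresh nullary symbol `⊥` (here `none`). -/
def Signature.bot (S : Signature) : Signature where
  Sym := Option S.Sym
  ar := fun o => match o with
    | none => 0
    | some f => S.ar f

/-- A rooted graph over a signature `S` with nodes `N`: a labelling, a successor
function respecting arities, and a root node. -/
structure TermGraph (S : Signature) (N : Type) where
  lab : N → S.Sym
  suc : (n : N) → Fin (S.ar (lab n)) → N
  root : N

namespace TermGraph

variable {S : Signature} {N M K : Type}

/-- `g.IsPos π n`: `π` is a position (path of successor indices from the root) of node `n`. -/
inductive IsPos (g : TermGraph S N) : List ℕ → N → Prop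
  | root : IsPos g [] g.root
  | step {π : List ℕ} {n : N} (h : IsPos g π n) (i : Fin (S.ar (g.lab n))) :
      IsPos g (π ++ [(i : ℕ)]) (g.suc n i)

/-- All nodes are reachable from the root. -/
def Reachable (g : TermGraph S N) : Prop :=
  ∀ n : N, ∃ π : List ℕ, g.IsPos π n

/-- The set of positions of `g`. -/
def pos (g : TermGraph S N) : Set (List ℕ) :=
  {π | ∃ n : N, g.IsPos π n}

/-- The set of positions of node `n` in `g`. -/
def nodePos (g : TermGraph S N) (n : N) : Set (List ℕ) :=
  {π | g.IsPos π n}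

/-- `π ∼_g π'`: `π` and `π'` are positions of the same node. -/
def Aliases (g : TermGraph S N) (π π' : List ℕ) : Prop :=
  ∃ n : N, g.IsPos π n ∧ g.IsPos π' n

/-- A position is acyclic if it passes no node twice. -/
def IsAcyclicPos (g : TermGraph S N) (π : List ℕ) : Prop :=
  ∀ (π₁ π₂ : List ℕ) (n : N), π₁ <+: π₂ → π₂ <+: π →
    g.IsPos π₁ n → g.IsPos π₂ n → π₁ = π₂

/-- The set of acyclic positions of node `n` in `g`. -/
def nodePosAcy (g : TermGraph S N) (n : N) : Set (List ℕ) :=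
  {π | g.IsPos π n ∧ g.IsAcyclicPos π}

/-- The set of acyclic positions of `g`. -/
def posAcy (g : TermGraph S N) : Set (List ℕ) :=
  {π | (∃ n : N, g.IsPos π n) ∧ g.IsAcyclicPos π}

/-- The depth of a node: the minimal length of its positions. -/
noncomputable def depth (g : TermGraph S N) (n : N) : ℕ :=
  sInf {k : ℕ | ∃ π : List ℕ, g.IsPos π n ∧ π.length = k}

open Classical in
/-- The (unique) node at a position. -/
noncomputable def nodeAt (g : TermGraph S N) (π : List ℕ) : N :=
  if h : ∃ n : N, g.IsPos π n then h.choose else g.root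

/-- The label `g(π)` at a position. -/
noncomputable def labAt (g : TermGraph S N) (π : List ℕ) : S.Sym :=
  g.lab (g.nodeAt π)

/-- `Δ`-homomorphism: root, labelling and successor conditions, the latter two
suspended on `Δ`-labelled nodes. -/
structure IsDHom (Δ : Set S.Sym) (g : TermGraph S N) (h : TermGraph S M)
    (φ : N → M) : Prop where
  root_eq : φ g.root = h.root
  lab_eq : ∀ n : N, g.lab n ∉ Δ → h.lab (φ n) = g.lab n
  suc_eq : ∀ n : N, g.lab n ∉ Δ → ∀ (i : ℕ) (hi : i < S.ar (g.lab n))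
      (hi' : i < S.ar (h.lab (φ n))),
      φ (g.suc n ⟨i, hi⟩) = h.suc (φ n) ⟨i, hi'⟩

/-- Rigidity: `Pa_g(n) = Pa_h(φ n)` for all non-`Δ`-labelled nodes `n`. -/
def IsRigid (Δ : Set S.Sym) (g : TermGraph S N) (h : TermGraph S M)
    (φ : N → M) : Prop :=
  ∀ n : N, g.lab n ∉ Δ → g.nodePosAcy n = h.nodePosAcy (φ n)

/-- Rigid `Δ`-homomorphism. -/
def IsRigidDHom (Δ : Set S.Sym) (g : TermGraph S N) (h : TermGraph S M)
    (φ : N → M) : Prop :=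
  IsDHom Δ g h φ ∧ IsRigid Δ g h φ

/-- Isomorphism of term graphs: a homomorphism with an inverse homomorphism. -/
def Iso (g : TermGraph S N) (h : TermGraph S M) : Prop :=
  ∃ (φ : N → M) (ψ : M → N), IsDHom ∅ g h φ ∧ IsDHom ∅ h g ψ ∧
    (∀ n : N, ψ (φ n) = n) ∧ (∀ m : M, φ (ψ m) = m)

/-- A partial term graph (over `Σ_⊥`) is total if no node is labelled `⊥`. -/
def Total (g : TermGraph S.bot N) : Prop := ∀ n : N, g.lab n ≠ none

/-- Rigid `⊥`-homomorphism between partial term graphs. -/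
def IsRigidBotHom (g : TermGraph S.bot N) (h : TermGraph S.bot M)
    (φ : N → M) : Prop :=
  IsRigidDHom ({none} : Set (Option S.Sym)) g h φ

/-- The `⊥`-depth of a partial term graph: the minimal depth of a `⊥`-labelled
node, `ω` (`⊤`) if there is none. -/
noncomputable def botDepth (g : TermGraph S.bot N) : ℕ∞ :=
  sInf {d : ℕ∞ | ∃ n : N, g.lab n = none ∧ (g.depth n : ℕ∞) = d}

/-- `m` is an acyclic predecessor of `n`: some acyclic position `π ++ [i]` of `n`
has `π` a position of `m`. -/
def acyPred (g : TermGraph S N) (n : N) : Set N :=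
  {m | ∃ (π : List ℕ) (i : ℕ), (π ++ [i]) ∈ g.nodePosAcy n ∧ g.IsPos π m}

/-- Retained nodes of the truncation at depth `d`: the least set of nodes
containing all nodes of depth `< d` and closed under acyclic predecessors. -/
inductive Retained (g : TermGraph S N) (d : ℕ) : N → Prop
  | shallow {n : N} : g.depth n < d → Retained g d n
  | pred {n m : N} : Retained g d n → m ∈ g.acyPred n → Retained g d m

theorem not_retained_zero {g : TermGraph S N} (n : N) : ¬ g.Retained 0 n := by
  intro h
  induction h with
  | shallow hd => exact Nat.not_lt_zero _ hd
  | pred _ _ ih => exact ih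

/-- Fringe nodes of the truncation at depth `d` (a pair `(n, i)` stands for the
fresh node `n^i`); at depth `0` the fringe is just (a copy of) the root. -/
def IsFringe (g : TermGraph S.bot N) (d : ℕ) (p : N × ℕ) : Prop :=
  if d = 0 then p = (g.root, 0)
  else g.Retained d p.1 ∧ ∃ h : p.2 < S.bot.ar (g.lab p.1),
    (¬ g.Retained d (g.suc p.1 ⟨p.2, h⟩) ∨
      (d - 1 ≤ g.depth p.1 ∧ p.1 ∉ g.acyPred (g.suc p.1 ⟨p.2, h⟩)))

/-- The node set of the rigid truncation: retained nodes plus fringe nodes. -/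
def TNode (g : TermGraph S.bot N) (d : ℕ) : Type :=
  {x : N ⊕ (N × ℕ) // Sum.elim (g.Retained d) (g.IsFringe d) x}

def truncLab (g : TermGraph S.bot N) (d : ℕ) (x : TNode g d) : S.bot.Sym :=
  Sum.elim (fun n => g.lab n) (fun _ => none) x.1

open Classical in
noncomputable def truncSuc (g : TermGraph S.bot N) (d : ℕ) :
    (x : TNode g d) → Fin (S.bot.ar (truncLab g d x)) → TNode g d
  | ⟨Sum.inl n, hn⟩ => fun i =>
      if hf : g.IsFringe d (n, (i : ℕ)) then ⟨Sum.inr (n, (i : ℕ)), hf⟩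
      else
        ⟨Sum.inl (g.suc n ⟨(i : ℕ), i.isLt⟩), by
          show g.Retained d (g.suc n ⟨(i : ℕ), i.isLt⟩)
          rcases Nat.eq_zero_or_pos d with hd | hd
          · subst hd
            exact ((not_retained_zero n) hn).elim
          · by_contra hc
            apply hf
            show g.IsFringe d (n, (i : ℕ))
            unfold IsFringe
            rw [if_neg (Nat.pos_iff_ne_zero.mp hd)]
            exact ⟨hn, i.isLt, Or.inl hc⟩⟩
  | ⟨Sum.inr p, hp⟩ => fun i => absurd i.isLt (Nat.not_lt_zero _)

noncomputable def truncRoot (g : TermGraph S.bot N) (d : ℕ) : TNode g d :=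
  if hd : d = 0 then
    ⟨Sum.inr (g.root, 0), by
      subst hd
      show g.IsFringe 0 (g.root, 0)
      simp [IsFringe]⟩
  else
    ⟨Sum.inl g.root, by
      show g.Retained d g.root
      exact Retained.shallow (lt_of_le_of_lt
        (Nat.sInf_le ⟨[], IsPos.root, rfl⟩) (Nat.pos_of_ne_zero hd))⟩

/-- The rigid truncation `g†d` of a partial term graph at finite depth `d`. -/
noncomputable def trunc (g : TermGraph S.bot N) (d : ℕ) :
    TermGraph S.bot (TNode g d) where
  lab := truncLab g d
  suc := truncSuc g d
  root := truncRoot g d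

end TermGraph

/-- A canonical term graph: a term graph whose nodes are sets of positions,
each node being exactly its set of positions, with all nodes reachable. -/
structure CTG (S : Signature) where
  nodes : Set (Set (List ℕ))
  tg : TermGraph S ↥nodes
  reach : tg.Reachable
  canon : ∀ n : ↥nodes, (n : Set (List ℕ)) = tg.nodePos n

namespace CTG

variable {S : Signature}

def pos (g : CTG S) : Set (List ℕ) := g.tg.pos
def Aliases (g : CTG S) : List ℕ → List ℕ → Prop := g.tg.Aliases
def posAcy (g : CTG S) : Set (List ℕ) := g.tg.posAcy
noncomputable def labAt (g : CTG S) : List ℕ → S.Sym := g.tg.labAt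

/-- A canonical partial term graph is total if it has no `⊥`-labelled node. -/
def Total (g : CTG S.bot) : Prop := g.tg.Total

/-- The rigid partial order `g ≤⊥r h`: there is a rigid `⊥`-homomorphism
from `g` to `h`. -/
def LeR (g h : CTG S.bot) : Prop :=
  ∃ φ, TermGraph.IsRigidBotHom g.tg h.tg φ

noncomputable def botDepth (g : CTG S.bot) : ℕ∞ := g.tg.botDepth

/-- `TruncIso g h d`: the rigid truncations of `g` and `h` at depth `d ≤ ω`
are isomorphic (`g†ω = g`). -/
def TruncIso {N M : Type} (g : TermGraph S.bot N) (h : TermGraph S.bot M)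
    (d : ℕ∞) : Prop :=
  (d = ⊤ → TermGraph.Iso g h) ∧
  ∀ k : ℕ, d = (k : ℕ∞) → TermGraph.Iso (g.trunc k) (h.trunc k)

/-- The rigid similarity `sim†(g,h)`: the maximal `d ≤ ω` such that
`g†d ≅ h†d`. -/
noncomputable def simr (g h : CTG S.bot) : ℕ∞ :=
  sSup {d : ℕ∞ | TruncIso g.tg h.tg d}

open Classical in
/-- The rigid distance `d†(g,h) = 2^{-sim†(g,h)}` (with `2^{-ω} = 0`). -/
noncomputable def rdist (g h : CTG S.bot) : ℝ :=
  if simr g h = ⊤ then 0 else (1 / 2 : ℝ) ^ (simr g h).toNat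

def IsUB (A : Set (CTG S.bot)) (u : CTG S.bot) : Prop := ∀ g ∈ A, LeR g u

def IsLubR (A : Set (CTG S.bot)) (u : CTG S.bot) : Prop :=
  IsUB A u ∧ ∀ v, IsUB A v → LeR u v

def IsLB (A : Set (CTG S.bot)) (l : CTG S.bot) : Prop := ∀ g ∈ A, LeR l g

def IsGlbR (A : Set (CTG S.bot)) (l : CTG S.bot) : Prop :=
  IsLB A l ∧ ∀ m, IsLB A m → LeR m l

/-- A directed set: non-empty and every two elements have an upper bound inside. -/
def DirectedR (A : Set (CTG S.bot)) : Prop :=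
  A.Nonempty ∧ ∀ g ∈ A, ∀ h ∈ A, ∃ u ∈ A, LeR g u ∧ LeR h u

/-- `L` is the limit inferior `⨆_{β<α} ⨅_{β≤ι<α} f ι` of the ordinal-indexed
sequence `(f ι)_{ι<α}` in the rigid partial order. -/
def IsLiminfR (α : Ordinal.{0}) (f : Ordinal.{0} → CTG S.bot) (L : CTG S.bot) : Prop :=
  ∃ inf : Ordinal.{0} → CTG S.bot,
    (∀ β < α, IsGlbR {g | ∃ ι, β ≤ ι ∧ ι < α ∧ g = f ι} (inf β)) ∧
    IsLubR {g | ∃ β < α, g = inf β} L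

/-- Cauchy condition for an ordinal-indexed sequence w.r.t. the rigid distance. -/
def OrdCauchy (α : Ordinal.{0}) (f : Ordinal.{0} → CTG S.bot) : Prop :=
  ∀ ε : ℝ, 0 < ε → ∃ β < α, ∀ ι ι' : Ordinal.{0},
    β < ι → ι < ι' → ι' < α → rdist (f ι) (f ι') < ε

/-- Convergence of an ordinal-indexed sequence to `g` w.r.t. the rigid distance. -/
def OrdTendsto (α : Ordinal.{0}) (f : Ordinal.{0} → CTG S.bot) (g : CTG S.bot) : Prop :=
  ∀ ε : ℝ, 0 < ε → ∃ β < α, ∀ ι : Ordinal.{0}, β < ι → ι < α → rdist (f ι) g < ε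

/-- `u` is the unravelling of `g`: the term tree with the same positions and
labels as `g` and trivial aliasing. -/
def IsUnravelling (g u : CTG S) : Prop :=
  u.pos = g.pos ∧ (∀ π ∈ g.pos, u.labAt π = g.labAt π) ∧
  (∀ π π' : List ℕ, u.Aliases π π' ↔ (π ∈ g.pos ∧ π = π'))

end CTG

/-- A labelled quotient tree over a signature `S`. -/
structure LQT (S : Signature) where
  P : Set (List ℕ)
  nonempty : P.Nonempty
  l : List ℕ → S.Sym
  rel : List ℕ → List ℕ → Prop
  rel_refl : ∀ π ∈ P, rel π π
  rel_symm : ∀ π π' : List ℕ, rel π π' → rel π' π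
  rel_trans : ∀ π π' π'' : List ℕ, rel π π' → rel π' π'' → rel π π''
  rel_mem : ∀ π π' : List ℕ, rel π π' → π ∈ P ∧ π' ∈ P
  reach_mem : ∀ (π : List ℕ) (i : ℕ), π ++ [i] ∈ P → π ∈ P
  reach_ar : ∀ (π : List ℕ) (i : ℕ), π ++ [i] ∈ P → i < S.ar (l π)
  congr_lab : ∀ π π' : List ℕ, rel π π' → l π = l π'
  congr_suc : ∀ (π π' : List ℕ) (i : ℕ), rel π π' → i < S.ar (l π) →
    rel (π ++ [i]) (π' ++ [i])

end TGR

/-! On canonical term graphs, `g ≤⊥r h` is a statement about positions only: aliasing is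
preserved and, at every position of a non-`⊥` node, so are the label and the set of aliased
acyclic positions. So the least upper bound of a directed set `D` can be built from positions,
as the canonical term graph of the union labelled quotient tree. Each datum of that tree is
witnessed in a single member of `D`, and directedness lets any two witnesses be compared inside
a common member. In particular a position is acyclic in the union iff it is acyclic in every
member above a given `g ∈ D`, which makes `g ≤⊥r ⊔D` rigid; for an upper bound `v`, rigidity of
`⊔D ≤⊥r v` at a non-`⊥` position is inherited through a member of `D` that labels it. -/

namespace TGR

theorem Signature.bot_ne_none_of_lt_ar {S : Signature} {x : Option S.Sym} {i : ℕ}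
    (hi : i < S.bot.ar x) : x ≠ none := by
  rintro rfl
  exact Nat.not_lt_zero i hi

namespace TermGraph

section

variable {S : Signature} {N M : Type} {g : TermGraph S N} {π π' : List ℕ} {i : ℕ} {n : N}

theorem isPos_nil_iff : g.IsPos [] n ↔ n = g.root := by
  refine ⟨fun h => ?_, fun h => h ▸ IsPos.root⟩
  generalize hπ : ([] : List ℕ) = π at h
  cases h with
  | root => rfl
  | step _ _ => simp at hπ

theorem isPos_snoc_iff :
    g.IsPos (π ++ [i]) n ↔
      ∃ (m : N) (hi : i < S.ar (g.lab m)), g.IsPos π m ∧ n = g.suc m ⟨i, hi⟩ := by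
  refine ⟨fun h => ?_, fun ⟨m, hi, hm, hn⟩ => hn ▸ hm.step ⟨i, hi⟩⟩
  generalize hπ : π ++ [i] = ρ at h
  cases h with
  | root => simp at hπ
  | step hm j =>
    obtain ⟨rfl, hj⟩ := List.append_inj' hπ rfl
    obtain rfl : i = j := by simpa using hj
    exact ⟨_, j.isLt, hm, rfl⟩

theorem IsPos.unique {n' : N} (h : g.IsPos π n) (h' : g.IsPos π n') : n = n' := by
  induction h generalizing n' with
  | root => exact (isPos_nil_iff.mp h').symm
  | step _ i ih =>
    obtain ⟨m', hi, hm', rfl⟩ := isPos_snoc_iff.mp h'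
    obtain rfl := ih hm'
    rfl

theorem IsPos.nodeAt_eq (h : g.IsPos π n) : g.nodeAt π = n := by
  have hex : ∃ n, g.IsPos π n := ⟨n, h⟩
  rw [nodeAt, dif_pos hex]
  exact hex.choose_spec.unique h

theorem IsPos.labAt_eq (h : g.IsPos π n) : g.labAt π = g.lab n := by
  rw [labAt, h.nodeAt_eq]

theorem mem_pos_of_snoc_mem_pos (h : π ++ [i] ∈ g.pos) : π ∈ g.pos :=
  let ⟨_, hn⟩ := h
  let ⟨m, _, hm, _⟩ := isPos_snoc_iff.mp hn
  ⟨m, hm⟩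

theorem lt_ar_labAt_of_snoc_mem_pos (h : π ++ [i] ∈ g.pos) : i < S.ar (g.labAt π) := by
  obtain ⟨_, hn⟩ := h
  obtain ⟨m, hi, hm, -⟩ := isPos_snoc_iff.mp hn
  rwa [hm.labAt_eq]

theorem aliases_self_iff : g.Aliases π π ↔ π ∈ g.pos :=
  ⟨fun ⟨n, h, _⟩ => ⟨n, h⟩, fun ⟨n, h⟩ => ⟨n, h, h⟩⟩

theorem Aliases.symm (h : g.Aliases π π') : g.Aliases π' π :=
  let ⟨n, h₁, h₂⟩ := h
  ⟨n, h₂, h₁⟩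

theorem Aliases.trans {π'' : List ℕ} (h : g.Aliases π π') (h' : g.Aliases π' π'') :
    g.Aliases π π'' :=
  let ⟨n, h₁, h₂⟩ := h
  let ⟨_, h₂', h₃⟩ := h'
  ⟨n, h₁, h₂'.unique h₂ ▸ h₃⟩

theorem Aliases.labAt_eq (h : g.Aliases π π') : g.labAt π = g.labAt π' :=
  let ⟨_, h₁, h₂⟩ := h
  h₁.labAt_eq.trans h₂.labAt_eq.symm

theorem Aliases.snoc (h : g.Aliases π π') (hi : i < S.ar (g.labAt π)) :
    g.Aliases (π ++ [i]) (π' ++ [i]) := by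
  obtain ⟨n, h₁, h₂⟩ := h
  rw [h₁.labAt_eq] at hi
  exact ⟨_, h₁.step ⟨i, hi⟩, h₂.step ⟨i, hi⟩⟩

/-- `Pa_g(n)` for the node `n` at position `π`. -/
def acyAliases (g : TermGraph S N) (π : List ℕ) : Set (List ℕ) :=
  {π' | g.Aliases π π' ∧ g.IsAcyclicPos π'}

theorem IsPos.nodePosAcy_eq (h : g.IsPos π n) : g.nodePosAcy n = g.acyAliases π := by
  ext π'
  exact ⟨fun ⟨h', hacy⟩ => ⟨⟨n, h, h'⟩, hacy⟩,
    fun ⟨⟨_, h₁, h₂⟩, hacy⟩ => ⟨h₁.unique h ▸ h₂, hacy⟩⟩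

theorem isAcyclicPos_iff :
    g.IsAcyclicPos π ↔ ∀ π₁ π₂, π₁ <+: π₂ → π₂ <+: π → g.Aliases π₁ π₂ → π₁ = π₂ :=
  ⟨fun h π₁ π₂ h₁ h₂ ⟨n, hn₁, hn₂⟩ => h π₁ π₂ n h₁ h₂ hn₁ hn₂,
    fun h π₁ π₂ n h₁ h₂ hn₁ hn₂ => h π₁ π₂ h₁ h₂ ⟨n, hn₁, hn₂⟩⟩

theorem IsAcyclicPos.of_aliases_imp {h : TermGraph S M}
    (hgh : ∀ π₁ π₂, g.Aliases π₁ π₂ → h.Aliases π₁ π₂) (hπ : h.IsAcyclicPos π) :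
    g.IsAcyclicPos π :=
  isAcyclicPos_iff.mpr fun π₁ π₂ h₁ h₂ ha => isAcyclicPos_iff.mp hπ π₁ π₂ h₁ h₂ (hgh _ _ ha)

end

section

variable {S : Signature} {N M : Type} {g : TermGraph S.bot N} {h : TermGraph S.bot M}

theorem IsDHom.isPos {φ : N → M} (hφ : IsDHom ({none} : Set (Option S.Sym)) g h φ)
    {π : List ℕ} {n : N} (hn : g.IsPos π n) : h.IsPos π (φ n) := by
  induction hn with
  | root => exact hφ.root_eq ▸ IsPos.root
  | @step π m _ i ih =>
    have hm : g.lab m ∉ ({none} : Set (Option S.Sym)) := Signature.bot_ne_none_of_lt_ar i.isLt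
    have hi : (i : ℕ) < S.bot.ar (h.lab (φ m)) := by
      rw [hφ.lab_eq m hm]
      exact i.isLt
    rw [show i = ⟨i, i.isLt⟩ from rfl, hφ.suc_eq m hm i i.isLt hi]
    exact ih.step ⟨i, hi⟩

/-- The trace of a rigid `⊥`-homomorphism `g → h` on positions (see `leR_iff_posRefines`). -/
structure PosRefines (g : TermGraph S.bot N) (h : TermGraph S.bot M) : Prop where
  aliases : ∀ π π', g.Aliases π π' → h.Aliases π π'
  labAt_eq : ∀ π ∈ g.pos, g.labAt π ≠ none → h.labAt π = g.labAt π
  acyAliases_eq : ∀ π ∈ g.pos, g.labAt π ≠ none → h.acyAliases π = g.acyAliases π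

theorem IsRigidBotHom.posRefines {φ : N → M} (hφ : IsRigidBotHom g h φ) : PosRefines g h := by
  obtain ⟨hom, rigid⟩ := hφ
  refine ⟨fun π π' ⟨n, h₁, h₂⟩ => ⟨φ n, hom.isPos h₁, hom.isPos h₂⟩, ?_, ?_⟩
  · rintro π ⟨n, hn⟩ hlab
    rw [hn.labAt_eq] at hlab ⊢
    rw [(hom.isPos hn).labAt_eq, hom.lab_eq n hlab]
  · rintro π ⟨n, hn⟩ hlab
    rw [hn.labAt_eq] at hlab
    rw [← (hom.isPos hn).nodePosAcy_eq, ← hn.nodePosAcy_eq, rigid n hlab]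

/-- The homomorphism sends each node to the node of `h` at one of its positions. -/
theorem PosRefines.exists_isRigidBotHom (hg : g.Reachable) (hgh : PosRefines g h) :
    ∃ φ, IsRigidBotHom g h φ := by
  choose p hp using hg
  have isPos_of_isPos : ∀ π n, g.IsPos π n → h.IsPos π (h.nodeAt (p n)) := by
    intro π n hπ
    obtain ⟨m, h₁, h₂⟩ := hgh.aliases _ _ ⟨n, hp n, hπ⟩
    rwa [h₁.nodeAt_eq]
  have labAt_ne : ∀ n, g.lab n ∉ ({none} : Set (Option S.Sym)) → g.labAt (p n) ≠ none :=
    fun n hn => (hp n).labAt_eq ▸ hn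
  refine ⟨fun n => h.nodeAt (p n), ⟨?_, fun n hn => ?_, fun n hn i hi hi' => ?_⟩, fun n hn => ?_⟩
  · exact isPos_nil_iff.mp (isPos_of_isPos _ _ IsPos.root)
  · rw [← (isPos_of_isPos _ _ (hp n)).labAt_eq, ← (hp n).labAt_eq]
    exact hgh.labAt_eq _ ⟨n, hp n⟩ (labAt_ne n hn)
  · exact (isPos_of_isPos _ _ ((hp n).step ⟨i, hi⟩)).unique
      ((isPos_of_isPos _ _ (hp n)).step ⟨i, hi'⟩)
  · rw [(hp n).nodePosAcy_eq, (isPos_of_isPos _ _ (hp n)).nodePosAcy_eq]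
    exact (hgh.acyAliases_eq _ ⟨n, hp n⟩ (labAt_ne n hn)).symm

end

end TermGraph

namespace CTG

variable {S : Signature} {g h : CTG S.bot} {π π' : List ℕ}

theorem leR_iff_posRefines : LeR g h ↔ g.tg.PosRefines h.tg :=
  ⟨fun ⟨_, hφ⟩ => hφ.posRefines, fun hgh => hgh.exists_isRigidBotHom g.reach⟩

theorem LeR.aliases (hgh : LeR g h) (ha : g.Aliases π π') : h.Aliases π π' :=
  (leR_iff_posRefines.mp hgh).aliases π π' ha

theorem LeR.labAt_eq (hgh : LeR g h) (hπ : π ∈ g.pos) (hne : g.labAt π ≠ none) :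
    h.labAt π = g.labAt π :=
  (leR_iff_posRefines.mp hgh).labAt_eq π hπ hne

theorem LeR.acyAliases_eq (hgh : LeR g h) (hπ : π ∈ g.pos) (hne : g.labAt π ≠ none) :
    h.tg.acyAliases π = g.tg.acyAliases π :=
  (leR_iff_posRefines.mp hgh).acyAliases_eq π hπ hne

end CTG

namespace LQT

variable {S : Signature} (t : LQT S) {π π' : List ℕ}

def cls (π : List ℕ) : Set (List ℕ) := {π' | t.rel π π'}

def nodes : Set (Set (List ℕ)) := t.cls '' t.P

def node (hπ : π ∈ t.P) : t.nodes := ⟨t.cls π, Set.mem_image_of_mem _ hπ⟩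

noncomputable def rep (C : t.nodes) : List ℕ := C.2.choose

theorem rep_mem (C : t.nodes) : t.rep C ∈ t.P := C.2.choose_spec.1

theorem cls_rep (C : t.nodes) : t.cls (t.rep C) = C := C.2.choose_spec.2

variable {t}

theorem nil_mem : [] ∈ t.P := by
  obtain ⟨π, hπ⟩ := t.nonempty
  induction π using List.reverseRecOn with
  | nil => exact hπ
  | append_singleton π i ih => exact ih (t.reach_mem π i hπ)

theorem snoc_mem {i : ℕ} (hπ : π ∈ t.P) (hi : i < S.ar (t.l π)) : π ++ [i] ∈ t.P :=
  (t.rel_mem _ _ (t.congr_suc π π i (t.rel_refl π hπ) hi)).1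

theorem cls_eq_cls_iff (hπ : π ∈ t.P) : t.cls π = t.cls π' ↔ t.rel π π' := by
  refine ⟨fun h => t.rel_symm _ _ ?_, fun h => Set.ext fun ρ => ?_⟩
  · exact (h ▸ t.rel_refl π hπ : π ∈ t.cls π')
  · exact ⟨t.rel_trans _ _ _ (t.rel_symm _ _ h), t.rel_trans _ _ _ h⟩

theorem rel_rep_node (hπ : π ∈ t.P) : t.rel (t.rep (t.node hπ)) π :=
  (cls_eq_cls_iff (t.rep_mem _)).mp (t.cls_rep _)

variable (t)

noncomputable def toTG : TermGraph S t.nodes where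
  lab C := t.l (t.rep C)
  suc C i := t.node (snoc_mem (t.rep_mem C) i.isLt)
  root := t.node nil_mem

variable {t}

theorem isPos_toTG_node (hπ : π ∈ t.P) : t.toTG.IsPos π (t.node hπ) := by
  induction π using List.reverseRecOn with
  | nil => exact TermGraph.IsPos.root
  | append_singleton π i ih =>
    have hπ' := t.reach_mem π i hπ
    have hi := t.reach_ar π i hπ
    have hr := rel_rep_node hπ'
    have hi' : i < S.ar (t.toTG.lab (t.node hπ')) := by
      change i < S.ar (t.l (t.rep (t.node hπ')))
      rwa [t.congr_lab _ _ hr]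
    refine TermGraph.isPos_snoc_iff.mpr ⟨_, hi', ih hπ', Subtype.ext ?_⟩
    exact (cls_eq_cls_iff hπ).mpr (t.congr_suc _ _ i (t.rel_symm _ _ hr) hi)

theorem isPos_toTG_iff {C : t.nodes} :
    t.toTG.IsPos π C ↔ π ∈ t.P ∧ (C : Set (List ℕ)) = t.cls π := by
  refine ⟨fun h => ?_, fun ⟨hπ, hC⟩ => (Subtype.ext hC : C = t.node hπ) ▸ isPos_toTG_node hπ⟩
  induction h with
  | root => exact ⟨nil_mem, rfl⟩
  | @step π C _ i ih =>
    have hr : t.rel (t.rep C) π := (cls_eq_cls_iff (t.rep_mem C)).mp ((t.cls_rep C).trans ih.2)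
    have hri := t.congr_suc _ _ i hr i.isLt
    exact ⟨(t.rel_mem _ _ hri).2, (cls_eq_cls_iff (t.rel_mem _ _ hri).1).mpr hri⟩

variable (t)

noncomputable def toCTG : CTG S where
  nodes := t.nodes
  tg := t.toTG
  reach C := ⟨t.rep C, isPos_toTG_iff.mpr ⟨t.rep_mem C, (t.cls_rep C).symm⟩⟩
  canon C := by
    ext ρ
    change ρ ∈ (C : Set (List ℕ)) ↔ t.toTG.IsPos ρ C
    rw [isPos_toTG_iff, ← t.cls_rep C, cls_eq_cls_iff (t.rep_mem C)]
    exact ⟨fun h => ⟨(t.rel_mem _ _ h).2, h⟩, And.right⟩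

variable {t}

theorem pos_toCTG : t.toCTG.pos = t.P :=
  Set.ext fun _ => ⟨fun ⟨_, h⟩ => (isPos_toTG_iff.mp h).1, fun h => ⟨_, isPos_toTG_node h⟩⟩

theorem aliases_toCTG_iff : t.toCTG.Aliases π π' ↔ t.rel π π' := by
  refine ⟨fun ⟨C, h₁, h₂⟩ => ?_, fun h => ?_⟩
  · obtain ⟨hπ, hC⟩ := isPos_toTG_iff.mp h₁
    exact (cls_eq_cls_iff hπ).mp (hC.symm.trans (isPos_toTG_iff.mp h₂).2)
  · obtain ⟨hπ, hπ'⟩ := t.rel_mem _ _ h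
    exact ⟨_, isPos_toTG_node hπ, isPos_toTG_iff.mpr ⟨hπ', (cls_eq_cls_iff hπ).mpr h⟩⟩

theorem labAt_toCTG (hπ : π ∈ t.P) : t.toCTG.labAt π = t.l π :=
  (isPos_toTG_node hπ).labAt_eq.trans (t.congr_lab _ _ (rel_rep_node hπ))

end LQT

namespace CTG

variable {S : Signature} {D : Set (CTG S.bot)} {g k : CTG S.bot} {π π' : List ℕ}

variable (D) in
open Classical in
noncomputable def supLab (π : List ℕ) : Option S.Sym :=
  if h : ∃ f, ∃ g ∈ D, π ∈ g.pos ∧ g.labAt π = some f then some h.choose else none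

theorem supLab_eq_some_iff (hD : DirectedR D) {f : S.Sym} :
    supLab D π = some f ↔ ∃ g ∈ D, π ∈ g.pos ∧ g.labAt π = some f := by
  have unique : ∀ f f', (∃ g ∈ D, π ∈ g.pos ∧ g.labAt π = some f) →
      (∃ g ∈ D, π ∈ g.pos ∧ g.labAt π = some f') → f = f' := by
    rintro f f' ⟨g, hg, hπ, hf⟩ ⟨g', hg', hπ', hf'⟩
    obtain ⟨w, -, hgw, hg'w⟩ := hD.2 g hg g' hg'
    have hw := (hgw.labAt_eq hπ (hf ▸ Option.some_ne_none f)).symm.trans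
      (hg'w.labAt_eq hπ' (hf' ▸ Option.some_ne_none f'))
    exact Option.some_injective _ (hf.symm.trans (hw.trans hf'))
  unfold supLab
  split_ifs with hex
  · exact ⟨fun h => Option.some_injective _ h ▸ hex.choose_spec,
      fun h => congrArg some (unique _ _ hex.choose_spec h)⟩
  · exact ⟨fun h => (nomatch h), fun h => absurd ⟨f, h⟩ hex⟩

theorem supLab_eq_labAt (hD : DirectedR D) (hg : g ∈ D) (hπ : π ∈ g.pos)
    (hne : g.labAt π ≠ none) : supLab D π = g.labAt π := by
  obtain ⟨f, hf⟩ := Option.ne_none_iff_exists'.mp hne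
  rw [hf, supLab_eq_some_iff hD]
  exact ⟨g, hg, hπ, hf⟩

theorem exists_aliases_labAt_eq (hD : DirectedR D) (hg : g ∈ D) (hπ : π ∈ g.pos)
    (hne : g.labAt π ≠ none) (hk : k ∈ D) (ha : k.Aliases π π') :
    ∃ w ∈ D, w.Aliases π π' ∧ w.labAt π = g.labAt π :=
  let ⟨w, hw, hgw, hkw⟩ := hD.2 g hg k hk
  ⟨w, hw, hkw.aliases ha, hgw.labAt_eq hπ hne⟩

theorem supLab_congr (hD : DirectedR D) (ha : ∃ k ∈ D, k.Aliases π π') :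
    supLab D π = supLab D π' := by
  suffices h : ∀ {π π'}, (∃ k ∈ D, k.Aliases π π') → ∀ f : S.Sym,
      supLab D π = some f → supLab D π' = some f from
    Option.ext fun f => ⟨h ha f, h (ha.imp fun _ ⟨hk, h⟩ => ⟨hk, h.symm⟩) f⟩
  rintro π π' ⟨k, hk, ha⟩ f hf
  obtain ⟨g, hg, hπ, hgf⟩ := (supLab_eq_some_iff hD).mp hf
  obtain ⟨w, hw, haw, hwg⟩ :=
    exists_aliases_labAt_eq hD hg hπ (hgf ▸ Option.some_ne_none f) hk ha
  refine (supLab_eq_some_iff hD).mpr ⟨w, hw, TermGraph.aliases_self_iff.mp (haw.symm.trans haw), ?_⟩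
  exact haw.labAt_eq.symm.trans (hwg.trans hgf)

variable (D) in
noncomputable def supLQT (hD : DirectedR D) : LQT S.bot where
  P := ⋃ g ∈ D, g.pos
  nonempty :=
    let ⟨g, hg⟩ := hD.1
    ⟨[], Set.mem_iUnion₂.mpr ⟨g, hg, g.tg.root, TermGraph.IsPos.root⟩⟩
  l := supLab D
  rel π π' := ∃ g ∈ D, g.Aliases π π'
  rel_refl π hπ :=
    let ⟨g, hg, hπ⟩ := Set.mem_iUnion₂.mp hπ
    ⟨g, hg, TermGraph.aliases_self_iff.mpr hπ⟩
  rel_symm _ _ := fun ⟨g, hg, ha⟩ => ⟨g, hg, ha.symm⟩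
  rel_trans _ _ _ := fun ⟨g, hg, ha⟩ ⟨g', hg', ha'⟩ =>
    let ⟨w, hw, hgw, hg'w⟩ := hD.2 g hg g' hg'
    ⟨w, hw, (hgw.aliases ha).trans (hg'w.aliases ha')⟩
  rel_mem _ _ := fun ⟨g, hg, ha⟩ =>
    ⟨Set.mem_iUnion₂.mpr ⟨g, hg, TermGraph.aliases_self_iff.mp (ha.trans ha.symm)⟩,
      Set.mem_iUnion₂.mpr ⟨g, hg, TermGraph.aliases_self_iff.mp (ha.symm.trans ha)⟩⟩
  reach_mem π i hπ :=
    let ⟨g, hg, hπ⟩ := Set.mem_iUnion₂.mp hπ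
    Set.mem_iUnion₂.mpr ⟨g, hg, TermGraph.mem_pos_of_snoc_mem_pos hπ⟩
  reach_ar π i hπ := by
    obtain ⟨g, hg, hπ⟩ := Set.mem_iUnion₂.mp hπ
    have hi := TermGraph.lt_ar_labAt_of_snoc_mem_pos hπ
    rwa [supLab_eq_labAt hD hg (TermGraph.mem_pos_of_snoc_mem_pos hπ)
      (Signature.bot_ne_none_of_lt_ar hi)]
  congr_lab _ _ := supLab_congr hD
  congr_suc π π' i := fun ⟨k, hk, ha⟩ hi => by
    obtain ⟨f, hf⟩ := Option.ne_none_iff_exists'.mp (Signature.bot_ne_none_of_lt_ar hi)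
    obtain ⟨g, hg, hπ, hgf⟩ := (supLab_eq_some_iff hD).mp hf
    obtain ⟨w, hw, haw, hwg⟩ :=
      exists_aliases_labAt_eq hD hg hπ (hgf ▸ Option.some_ne_none f) hk ha
    refine ⟨w, hw, haw.snoc ?_⟩
    change i < S.bot.ar (w.labAt π)
    rwa [hwg, hgf, ← hf]

variable (D) in
noncomputable def lub (hD : DirectedR D) : CTG S.bot := (supLQT D hD).toCTG

theorem pos_lub (hD : DirectedR D) : (lub D hD).pos = ⋃ g ∈ D, g.pos :=
  LQT.pos_toCTG

theorem aliases_lub_iff (hD : DirectedR D) :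
    (lub D hD).Aliases π π' ↔ ∃ g ∈ D, g.Aliases π π' :=
  LQT.aliases_toCTG_iff

theorem labAt_lub (hD : DirectedR D) (hπ : π ∈ (lub D hD).pos) :
    (lub D hD).labAt π = supLab D π :=
  LQT.labAt_toCTG (LQT.pos_toCTG ▸ hπ)

/-- Any aliasing in `lub D hD` already happens in a member of `D` above `g`. -/
theorem isAcyclicPos_lub_iff (hD : DirectedR D) (hg : g ∈ D) :
    (lub D hD).tg.IsAcyclicPos π ↔ ∀ w ∈ D, LeR g w → w.tg.IsAcyclicPos π := by
  refine ⟨fun h w hw _ => h.of_aliases_imp fun _ _ ha => (aliases_lub_iff hD).mpr ⟨w, hw, ha⟩,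
    fun h => TermGraph.isAcyclicPos_iff.mpr fun π₁ π₂ h₁ h₂ ha => ?_⟩
  obtain ⟨k, hk, hak⟩ := (aliases_lub_iff hD).mp ha
  obtain ⟨w, hw, hgw, hkw⟩ := hD.2 g hg k hk
  exact TermGraph.isAcyclicPos_iff.mp (h w hw hgw) π₁ π₂ h₁ h₂ (hkw.aliases hak)

theorem le_lub (hD : DirectedR D) (hg : g ∈ D) : LeR g (lub D hD) := by
  refine leR_iff_posRefines.mpr ⟨fun π π' ha => (aliases_lub_iff hD).mpr ⟨g, hg, ha⟩,
    fun π hπ hne => ?_, fun π hπ hne => Set.ext fun π' => ⟨?_, fun hmem => ?_⟩⟩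
  · have hπ' : π ∈ (lub D hD).pos := pos_lub hD ▸ Set.mem_iUnion₂.mpr ⟨g, hg, hπ⟩
    exact (labAt_lub hD hπ').trans (supLab_eq_labAt hD hg hπ hne)
  · rintro ⟨ha, hacy⟩
    obtain ⟨k, hk, hak⟩ := (aliases_lub_iff hD).mp ha
    obtain ⟨w, hw, hgw, hkw⟩ := hD.2 g hg k hk
    have hmem : π' ∈ w.tg.acyAliases π :=
      ⟨hkw.aliases hak, (isAcyclicPos_lub_iff hD hg).mp hacy w hw hgw⟩
    rwa [hgw.acyAliases_eq hπ hne] at hmem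
  · refine ⟨(aliases_lub_iff hD).mpr ⟨g, hg, hmem.1⟩,
      (isAcyclicPos_lub_iff hD hg).mpr fun w hw hgw => ?_⟩
    rw [← hgw.acyAliases_eq hπ hne] at hmem
    exact hmem.2

theorem exists_mem_labAt_eq_labAt_lub (hD : DirectedR D) (hπ : π ∈ (lub D hD).pos)
    (hne : (lub D hD).labAt π ≠ none) :
    ∃ g ∈ D, π ∈ g.pos ∧ g.labAt π = (lub D hD).labAt π := by
  obtain ⟨f, hf⟩ := Option.ne_none_iff_exists'.mp hne
  rw [hf]
  exact (supLab_eq_some_iff hD).mp ((labAt_lub hD hπ).symm.trans hf)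

theorem lub_le (hD : DirectedR D) {v : CTG S.bot} (hv : IsUB D v) : LeR (lub D hD) v := by
  refine leR_iff_posRefines.mpr ⟨fun π π' ha => ?_, fun π hπ hne => ?_, fun π hπ hne => ?_⟩
  · obtain ⟨g, hg, ha⟩ := (aliases_lub_iff hD).mp ha
    exact (hv g hg).aliases ha
  all_goals
    obtain ⟨g, hg, hπg, hgπ⟩ := exists_mem_labAt_eq_labAt_lub hD hπ hne
    have hgne : g.labAt π ≠ none := hgπ ▸ hne
  · exact ((hv g hg).labAt_eq hπg hgne).trans hgπ
  · exact ((hv g hg).acyAliases_eq hπg hgne).trans ((le_lub hD hg).acyAliases_eq hπg hgne).symm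

variable (S) in
def botLQT : LQT S.bot where
  P := {[]}
  nonempty := ⟨[], rfl⟩
  l _ := none
  rel π π' := π = [] ∧ π' = []
  rel_refl _ hπ := ⟨hπ, hπ⟩
  rel_symm _ _ h := ⟨h.2, h.1⟩
  rel_trans _ _ _ h h' := ⟨h.1, h'.2⟩
  rel_mem _ _ h := h
  reach_mem π i h := absurd h (by simp)
  reach_ar π i h := absurd h (by simp)
  congr_lab _ _ _ := rfl
  congr_suc _ _ i _ hi := absurd hi (Nat.not_lt_zero i)

variable (S) in
noncomputable def bot : CTG S.bot := (botLQT S).toCTG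

theorem eq_root_of_bot_nodes (n : (bot S).nodes) : n = (bot S).tg.root := by
  obtain ⟨π, rfl, hn⟩ := n.2
  exact Subtype.ext hn.symm

theorem bot_le (g : CTG S.bot) : LeR (bot S) g := by
  refine leR_iff_posRefines.mpr ⟨fun π π' ha => ?_, fun π hπ hne => ?_, fun π hπ hne => ?_⟩
  · obtain ⟨rfl, rfl⟩ := LQT.aliases_toCTG_iff.mp ha
    exact TermGraph.aliases_self_iff.mpr ⟨g.tg.root, TermGraph.IsPos.root⟩
  all_goals exact absurd (LQT.labAt_toCTG (LQT.pos_toCTG ▸ hπ)) hne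

end CTG

/-- The canonical partial term graphs ordered by `≤⊥r` form a
cpo: there is a least element `⊥`, and every directed set `D` has a least upper
bound, namely the canonical term graph determined by the labelled quotient tree
`(⋃_{g∈D} P(g), l, ⋃_{g∈D} ∼_g)` where `l(π) = f` if `f ∈ Σ` and `g(π) = f` for
some `g ∈ D`, and `l(π) = ⊥` otherwise. -/
theorem rigid_order_cpo (S : Signature) :
    (∃ bot : CTG S.bot, (∀ n : ↥bot.nodes, n = bot.tg.root) ∧
        bot.tg.lab bot.tg.root = none ∧ ∀ g : CTG S.bot, CTG.LeR bot g) ∧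
    (∀ D : Set (CTG S.bot), CTG.DirectedR D →
      ∃ u : CTG S.bot, CTG.IsLubR D u ∧
        u.pos = (⋃ g ∈ D, CTG.pos g) ∧
        (∀ π π' : List ℕ, u.Aliases π π' ↔ ∃ g ∈ D, CTG.Aliases g π π') ∧
        (∀ π ∈ u.pos, ∀ fS : S.Sym,
          (u.labAt π = some fS ↔
            ∃ g ∈ D, π ∈ CTG.pos g ∧ CTG.labAt g π = some fS))) := by
  refine ⟨⟨CTG.bot S, CTG.eq_root_of_bot_nodes, rfl, CTG.bot_le⟩, fun D hD => ?_⟩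
  refine ⟨CTG.lub D hD, ⟨fun g hg => CTG.le_lub hD hg, fun v hv => CTG.lub_le hD hv⟩,
    CTG.pos_lub hD, fun π π' => CTG.aliases_lub_iff hD, fun π hπ fS => ?_⟩
  rw [CTG.labAt_lub hD hπ]
  exact CTG.supLab_eq_some_iff hD

end TGR
end

section
/- For canonical partial term graphs g, h over Σ_⊥, g ≤⊥r h holds if and only if all three of the following conditions are met: (a) for all positions π, π' of g, π ∼_g π' implies π ∼_h π'; (b) for all positions π of g with g(π) ∈ Σ and all acyclic positions π' of h, π ∼_h π' implies π ∼_g π'; (c) g(π) = h(π) for every position π of g with g(π) ∈ Σ. -/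
set_option autoImplicit false

namespace TGR


namespace TermGraph

variable {S : Signature} {N M : Type}

lemma isPos_nil' {g : TermGraph S N} {n : N} (hp : g.IsPos [] n) : n = g.root := by
  generalize hσ : ([] : List ℕ) = σ at hp
  cases hp with
  | root => rfl
  | step h i => exact absurd hσ.symm (by simp)

lemma isPos_concat' {g : TermGraph S N} {π : List ℕ} {i : ℕ} {n : N}
    (hp : g.IsPos (π ++ [i]) n) :
    ∃ (m : N) (_ : g.IsPos π m) (hi : i < S.ar (g.lab m)), n = g.suc m ⟨i, hi⟩ := by
  generalize hσ : π ++ [i] = σ at hp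
  cases hp with
  | root => exact absurd hσ (by simp)
  | step h j =>
    obtain ⟨h1, h2⟩ := List.append_inj' hσ rfl
    subst h1
    obtain rfl : i = (j : ℕ) := by simpa using h2
    exact ⟨_, h, j.isLt, by simp⟩

lemma isPos_unique {g : TermGraph S N} {π : List ℕ} {n n' : N}
    (h1 : g.IsPos π n) (h2 : g.IsPos π n') : n = n' := by
  induction h1 generalizing n' with
  | root => exact (isPos_nil' h2).symm
  | step h j ih =>
    obtain ⟨m, hm, hi, rfl⟩ := isPos_concat' h2
    obtain rfl := ih hm
    rfl

lemma isPos_prefix {g : TermGraph S N} {π π' : List ℕ} {n : N}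
    (hp : g.IsPos π n) (hpre : π' <+: π) : ∃ m, g.IsPos π' m := by
  induction hp with
  | root => exact ⟨g.root, by simpa [List.prefix_nil.mp hpre] using IsPos.root⟩
  | step h j ih =>
    rcases List.prefix_concat_iff.mp hpre with rfl | hpre'
    · exact ⟨_, h.step j⟩
    · exact ih hpre'

lemma lab_ne_none_of_step {g : TermGraph S.bot N} {π : List ℕ} {i : ℕ} {n m : N}
    (hp : g.IsPos (π ++ [i]) n) (hm : g.IsPos π m) : g.lab m ≠ none := by
  obtain ⟨m', hm', hi, _⟩ := isPos_concat' hp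
  obtain rfl := isPos_unique hm hm'
  intro hc
  rw [hc] at hi
  exact Nat.not_lt_zero i hi

lemma lab_ne_none_prefix {g : TermGraph S.bot N} {π π' : List ℕ} {n m : N}
    (hp : g.IsPos π n) (hn : g.lab n ≠ none) (hpre : π' <+: π) (hm : g.IsPos π' m) :
    g.lab m ≠ none := by
  obtain ⟨ρ, rfl⟩ := hpre
  cases ρ with
  | nil => rw [List.append_nil] at hp; rwa [isPos_unique hm hp]
  | cons j ρ' =>
    obtain ⟨k, hk⟩ := isPos_prefix (π' := π' ++ [j]) hp
      ⟨ρ', by rw [List.append_assoc]; rfl⟩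
    exact lab_ne_none_of_step hk hm

lemma isPos_map {g : TermGraph S.bot N} {h : TermGraph S.bot M} {φ : N → M}
    (hφ : IsDHom ({none} : Set (S.bot.Sym)) g h φ) {π : List ℕ} {n : N}
    (hp : g.IsPos π n) : h.IsPos π (φ n) := by
  induction hp with
  | root => exact hφ.root_eq ▸ IsPos.root
  | @step π' n' hp' i ih =>
    have hpos : 0 < S.bot.ar (g.lab n') := i.pos
    have hnn : g.lab n' ∉ ({none} : Set (S.bot.Sym)) := by
      intro hc
      have hc' : g.lab n' = none := hc
      rw [hc'] at hpos
      exact Nat.lt_irrefl 0 hpos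
    have hi' : (i : ℕ) < S.bot.ar (h.lab (φ n')) := by
      rw [hφ.lab_eq n' hnn]; exact i.isLt
    have heq := hφ.suc_eq n' hnn i i.isLt hi'
    have hgoal : h.IsPos (π' ++ [(i : ℕ)]) (h.suc (φ n') ⟨(i : ℕ), hi'⟩) :=
      ih.step ⟨(i : ℕ), hi'⟩
    rwa [← heq] at hgoal

lemma isPos_transfer {g : TermGraph S N} {π π' ρ : List ℕ} {m n : N}
    (h1 : g.IsPos π m) (h2 : g.IsPos π' m) (h3 : g.IsPos (π ++ ρ) n) :
    g.IsPos (π' ++ ρ) n := by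
  induction ρ using List.reverseRecOn generalizing n with
  | nil =>
    rw [List.append_nil] at h3 ⊢
    rwa [isPos_unique h3 h1]
  | append_singleton ρ j ih =>
    rw [← List.append_assoc] at h3
    obtain ⟨k, hk, hi, rfl⟩ := isPos_concat' h3
    rw [← List.append_assoc]
    exact (ih hk).step ⟨j, hi⟩

lemma exists_acyclic_pos {g : TermGraph S N} {n : N} (hr : ∃ π, g.IsPos π n) :
    ∃ π, g.IsPos π n ∧ g.IsAcyclicPos π := by
  have hne : {k : ℕ | ∃ π, g.IsPos π n ∧ π.length = k}.Nonempty := by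
    obtain ⟨π, hπ⟩ := hr; exact ⟨π.length, π, hπ, rfl⟩
  obtain ⟨π₀, hπ₀, hlen⟩ := Nat.sInf_mem hne
  refine ⟨π₀, hπ₀, fun π₁ π₂ m h12 h2 hm1 hm2 => ?_⟩
  by_contra hne'
  obtain ⟨τ, rfl⟩ := h12
  obtain ⟨ρ, rfl⟩ := h2
  have htr : g.IsPos (π₁ ++ ρ) n := isPos_transfer (π := π₁ ++ τ) hm2 hm1 hπ₀
  have hle : sInf {k : ℕ | ∃ π, g.IsPos π n ∧ π.length = k} ≤ (π₁ ++ ρ).length :=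
    Nat.sInf_le ⟨π₁ ++ ρ, htr, rfl⟩
  have hτ : τ ≠ [] := fun hc => hne' (by simp [hc])
  have hlt := List.length_pos_iff.mpr hτ
  simp only [List.length_append] at hle hlen
  omega

lemma nodeAt_eq {g : TermGraph S N} {π : List ℕ} {n : N} (hp : g.IsPos π n) :
    g.nodeAt π = n := by
  have hex : ∃ m, g.IsPos π m := ⟨n, hp⟩
  unfold nodeAt
  rw [dif_pos hex]
  exact isPos_unique hex.choose_spec hp

lemma labAt_eq {g : TermGraph S N} {π : List ℕ} {n : N} (hp : g.IsPos π n) :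
    g.labAt π = g.lab n := by
  unfold labAt
  rw [nodeAt_eq hp]

end TermGraph

open TermGraph in
/-- Characterisation of the rigid partial order `≤⊥r` for
canonical partial term graphs in terms of labelled quotient trees:
`g ≤⊥r h` iff (a) aliasing in `g` implies aliasing in `h`; (b) for positions of
`g` with a `Σ`-label and acyclic positions of `h`, aliasing in `h` implies
aliasing in `g`; (c) labels in `Σ` are preserved. -/
theorem leR_characterisation (S : Signature) (g h : CTG S.bot) :
    CTG.LeR g h ↔
      ((∀ π π' : List ℕ, g.Aliases π π' → h.Aliases π π') ∧
       (∀ π ∈ g.pos, g.labAt π ≠ none →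
          ∀ π' ∈ h.posAcy, h.Aliases π π' → g.Aliases π π') ∧
       (∀ π ∈ g.pos, g.labAt π ≠ none → h.labAt π = g.labAt π)) := by
  constructor
  · rintro ⟨φ, hhom, hrig⟩
    refine ⟨?_, ?_, ?_⟩
    · rintro π π' ⟨n, h1, h2⟩
      exact ⟨φ n, isPos_map hhom h1, isPos_map hhom h2⟩
    · rintro π ⟨n, hπ⟩ hlab π' ⟨⟨m, hm⟩, hacy⟩ ⟨m', h1, h2⟩
      have hlabn : g.tg.lab n ≠ none := by
        have : g.tg.labAt π ≠ none := hlab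
        rwa [labAt_eq hπ] at this
      have hφ : h.tg.IsPos π (φ n) := isPos_map hhom hπ
      obtain rfl := isPos_unique h1 hφ
      have hmem : π' ∈ h.tg.nodePosAcy (φ n) := ⟨h2, hacy⟩
      rw [← hrig n hlabn] at hmem
      exact ⟨n, hπ, hmem.1⟩
    · rintro π ⟨n, hπ⟩ hlab
      have hlabn : g.tg.lab n ≠ none := by
        have : g.tg.labAt π ≠ none := hlab
        rwa [labAt_eq hπ] at this
      have hφ : h.tg.IsPos π (φ n) := isPos_map hhom hπ
      show h.tg.labAt π = g.tg.labAt π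
      rw [labAt_eq hπ, labAt_eq hφ]
      exact hhom.lab_eq n hlabn
  · rintro ⟨ha, hb, hc⟩
    have hch : ∀ n : ↥g.nodes, ∃ (π : List ℕ) (m : ↥h.nodes),
        g.tg.IsPos π n ∧ h.tg.IsPos π m := by
      intro n
      obtain ⟨π, hπ⟩ := g.reach n
      obtain ⟨m, hm, _⟩ := ha π π ⟨n, hπ, hπ⟩
      exact ⟨π, m, hπ, hm⟩
    choose πf φ hπf hφf using hch
    have key : ∀ (π : List ℕ) (n : ↥g.nodes), g.tg.IsPos π n →
        h.tg.IsPos π (φ n) := by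
      intro π n hπ
      obtain ⟨m, h1, h2⟩ := ha π (πf n) ⟨n, hπ, hπf n⟩
      exact isPos_unique h2 (hφf n) ▸ h1
    have acyG : ∀ π : List ℕ, h.tg.IsAcyclicPos π → g.tg.IsAcyclicPos π := by
      intro π hacy π₁ π₂ m h12 h2 hm1 hm2
      obtain ⟨m', h1', h2'⟩ := ha π₁ π₂ ⟨m, hm1, hm2⟩
      exact hacy π₁ π₂ m' h12 h2 h1' h2'
    have acyH : ∀ (π : List ℕ) (n : ↥g.nodes), g.tg.IsPos π n →
        g.tg.lab n ≠ none → g.tg.IsAcyclicPos π → h.tg.IsAcyclicPos π := by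
      intro π n hπ hlabn hacy
      by_contra hcon
      simp only [TermGraph.IsAcyclicPos] at hcon
      push_neg at hcon
      set Bad := {k : ℕ | ∃ (π₁ π₂ : List ℕ) (m : ↥h.nodes), π₁ <+: π₂ ∧ π₂ <+: π ∧
        h.tg.IsPos π₁ m ∧ h.tg.IsPos π₂ m ∧ π₁ ≠ π₂ ∧ π₂.length = k} with hBadDef
      have hBad : Bad.Nonempty := by
        obtain ⟨π₁, π₂, m, a1, a2, a3, a4, a5⟩ := hcon
        exact ⟨π₂.length, π₁, π₂, m, a1, a2, a3, a4, a5, rfl⟩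
      obtain ⟨π₁, π₂, m, h12, h2π, hm1, hm2, hnemin, hlen⟩ := Nat.sInf_mem hBad
      have hlt12 : π₁.length < π₂.length := by
        obtain ⟨τ, rfl⟩ := h12
        have hτ : τ ≠ [] := fun hcc => hnemin (by simp [hcc])
        have := List.length_pos_iff.mpr hτ
        simp only [List.length_append]
        omega
      have hacy1 : h.tg.IsAcyclicPos π₁ := by
        intro σ₁ σ₂ m' s12 s2 hs1 hs2
        by_contra hsne
        have hmem : σ₂.length ∈ Bad :=
          ⟨σ₁, σ₂, m', s12, s2.trans (h12.trans h2π), hs1, hs2, hsne, rfl⟩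
        have hle := Nat.sInf_le hmem
        have hle2 := s2.length_le
        omega
      obtain ⟨n₂, hn₂⟩ := isPos_prefix hπ h2π
      have hlab2 : g.tg.lab n₂ ≠ none := lab_ne_none_prefix hπ hlabn h2π hn₂
      have hal : g.Aliases π₂ π₁ := by
        refine hb π₂ ⟨n₂, hn₂⟩ ?_ π₁ ⟨⟨m, hm1⟩, hacy1⟩ ⟨m, hm2, hm1⟩
        show g.tg.labAt π₂ ≠ none
        rwa [labAt_eq hn₂]
      obtain ⟨k, hk2, hk1⟩ := hal
      exact hnemin (hacy π₁ π₂ k h12 h2π hk1 hk2)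
    refine ⟨φ, ⟨?_, ?_, ?_⟩, ?_⟩
    · exact isPos_unique (key [] _ IsPos.root) IsPos.root
    · intro n hn
      have hn' : g.tg.lab n ≠ none := fun hx => hn hx
      have hglab : g.tg.labAt (πf n) ≠ none := by rwa [labAt_eq (hπf n)]
      have hcc : h.tg.labAt (πf n) = g.tg.labAt (πf n) :=
        hc (πf n) ⟨n, hπf n⟩ hglab
      rwa [labAt_eq (hπf n), labAt_eq (hφf n)] at hcc
    · intro n hn i hi hi'
      have hstep : g.tg.IsPos (πf n ++ [i]) (g.tg.suc n ⟨i, hi⟩) :=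
        (hπf n).step ⟨i, hi⟩
      have h1 : h.tg.IsPos (πf n ++ [i]) (φ (g.tg.suc n ⟨i, hi⟩)) :=
        key _ _ hstep
      have h2 : h.tg.IsPos (πf n ++ [i]) (h.tg.suc (φ n) ⟨i, hi'⟩) :=
        (hφf n).step ⟨i, hi'⟩
      exact isPos_unique h1 h2
    · intro n hn
      have hn' : g.tg.lab n ≠ none := fun hx => hn hx
      apply Set.eq_of_subset_of_subset
      · rintro π ⟨hπn, hacy⟩
        exact ⟨key π n hπn, acyH π n hπn hn' hacy⟩
      · rintro π ⟨hπφ, hacy⟩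
        obtain ⟨σ, hσ, hσacy⟩ := exists_acyclic_pos (g.reach n)
        have hσh : h.tg.IsPos σ (φ n) := key σ n hσ
        have hal : g.Aliases σ π := by
          refine hb σ ⟨n, hσ⟩ ?_ π ⟨⟨φ n, hπφ⟩, hacy⟩ ⟨φ n, hσh, hπφ⟩
          show g.tg.labAt σ ≠ none
          rwa [labAt_eq hσ]
        obtain ⟨k, hk1, hk2⟩ := hal
        obtain rfl := isPos_unique hk1 hσ
        exact ⟨hk2, acyG π hacy⟩


end TGR
end

section
/- Every rigid Δ-homomorphism is injective on non-Δ-labelled nodes: if φ : g →_Δ h is a rigid Δ-homomorphism between term graphs g and h, and n, m are nodes of g with lab^g(n) ∉ Δ, lab^g(m) ∉ Δ, and φ(n) = φ(m), then n = m. -/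
set_option autoImplicit false

namespace TGR

section Aux

variable {S : Signature} {N : Type} {g : TermGraph S N}

lemma isPos_snoc {π : List ℕ} {i : ℕ} {n : N} (h : g.IsPos (π ++ [i]) n) :
    ∃ (m : N) (hi : i < S.ar (g.lab m)), g.IsPos π m ∧ n = g.suc m ⟨i, hi⟩ := by
  generalize hτ : π ++ [i] = τ at h
  cases h with
  | root => exact absurd hτ (by simp)
  | step h' j =>
    rename_i π' m
    obtain ⟨hπ, hj⟩ : π' = π ∧ (j : ℕ) = i := by
      constructor <;> [skip; skip] <;>
      · have := List.append_inj' hτ rfl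
        simp_all
    subst hπ
    exact ⟨m, hj ▸ j.isLt, h', by cases hj; rfl⟩

lemma isPos_det {π : List ℕ} {n m : N} (h1 : g.IsPos π n) (h2 : g.IsPos π m) :
    n = m := by
  induction h1 generalizing m with
  | root =>
    generalize hτ : ([] : List ℕ) = τ at h2
    cases h2 with
    | root => rfl
    | step h' j => exact absurd hτ.symm (by simp)
  | step h' j ih =>
    obtain ⟨k, hk, hkpos, hkeq⟩ := isPos_snoc h2
    rename_i n'
    obtain rfl : n' = k := ih hkpos
    rw [hkeq]

lemma isPos_comp {π₁ π₂ : List ℕ} {k : N} (h1 : g.IsPos π₁ k) (h2 : g.IsPos π₂ k) :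
    ∀ (σ : List ℕ) {n : N}, g.IsPos (π₂ ++ σ) n → g.IsPos (π₁ ++ σ) n := by
  intro σ
  induction σ using List.reverseRecOn with
  | nil =>
    intro n hn
    simp only [List.append_nil] at hn ⊢
    obtain rfl : k = n := isPos_det h2 hn
    exact h1
  | append_singleton σ i ih =>
    intro n hn
    rw [← List.append_assoc] at hn
    obtain ⟨m, hi, hm, rfl⟩ := isPos_snoc hn
    rw [← List.append_assoc]
    exact (ih hm).step ⟨i, hi⟩

lemma exists_acyclic_pos {n : N} {π : List ℕ} (h : g.IsPos π n) :
    ∃ π', π' ∈ g.nodePosAcy n := by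
  suffices H : ∀ L (π : List ℕ), π.length = L → g.IsPos π n →
      ∃ π', π' ∈ g.nodePosAcy n from H π.length π rfl h
  clear h π
  intro L
  induction L using Nat.strong_induction_on with
  | _ L ih =>
  intro π hlen h
  by_cases hacy : g.IsAcyclicPos π
  · exact ⟨π, h, hacy⟩
  · simp only [TermGraph.IsAcyclicPos, not_forall] at hacy
    obtain ⟨π₁, π₂, k, h12, h2π, hk1, hk2, hne⟩ := hacy
    obtain ⟨ρ, rfl⟩ := h2π
    have hπ' : g.IsPos (π₁ ++ ρ) n := isPos_comp hk1 hk2 ρ h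
    have hlt : (π₁ ++ ρ).length < L := by
      obtain ⟨t, rfl⟩ := h12
      have ht : t ≠ [] := by rintro rfl; simp at hne
      subst hlen
      simp only [List.length_append]
      have := List.length_pos_iff.mpr ht
      omega
    exact ih _ hlt _ rfl hπ'

end Aux

/-- Every rigid `Δ`-homomorphism is injective on
non-`Δ`-labelled nodes. -/
theorem rigid_dhom_injective (S : Signature) (Δ : Set S.Sym)
    (hΔ : ∀ f ∈ Δ, S.ar f = 0) (N M : Type)
    (g : TermGraph S N) (h : TermGraph S M)
    (hg : g.Reachable) (hh : h.Reachable)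
    (φ : N → M) (hφ : TermGraph.IsRigidDHom Δ g h φ)
    (n m : N) (hn : g.lab n ∉ Δ) (hm : g.lab m ∉ Δ) (heq : φ n = φ m) :
    n = m := by
  obtain ⟨πn, hπn⟩ := hg n
  obtain ⟨π, hπ⟩ := exists_acyclic_pos hπn
  have h1 : π ∈ h.nodePosAcy (φ n) := (hφ.2 n hn) ▸ hπ
  have h2 : π ∈ g.nodePosAcy m := by
    rw [hφ.2 m hm, ← heq]; exact h1
  exact isPos_det hπ.1 h2.1

end TGR
end
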